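/- arXiv:1902.07157 — 4 statements merged into one kernel-verified Lean document; each statement's English description precedes it below -/
import Mathlib

section
/- The ideal m is indecomposable as an R-module; in particular there is no surjective R-module homomorphism from m onto R when m is not principal. -/
/-! For `x, y` in an ideal `I`, the elements `x • y` and `y • x` of the `R`-module `I` coincide.
In a domain this common element is nonzero whenever `x` and `y` are, so two nonzero submodules
of `I` always meet. For a linear map `f : I → R` it gives `y * f x = x * f y`; taking `f x = 1`
shows that a surjection `I → R` forces `I = (x)`. -/

namespace Ideal

variable {R : Type*} [CommRing R] (I : Ideal R)

theorem coe_smul_comm (x y : I) : (x : R) • y = (y : R) • x :=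
  Subtype.ext (mul_comm _ _)

theorem not_disjoint_of_ne_bot [IsDomain R] {N P : Submodule R I} (hN : N ≠ ⊥) (hP : P ≠ ⊥) :
    ¬ Disjoint N P := by
  obtain ⟨x, hxN, hx⟩ := Submodule.ne_bot_iff N |>.mp hN
  obtain ⟨y, hyP, hy⟩ := Submodule.ne_bot_iff P |>.mp hP
  rw [Submodule.disjoint_def]
  intro h
  have hxy : (y : R) • x = 0 :=
    h _ (N.smul_mem _ hxN) (coe_smul_comm I y x ▸ P.smul_mem _ hyP)
  have hxy' : (y : R) * x = 0 := congrArg Subtype.val hxy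
  rcases mul_eq_zero.mp hxy' with hy' | hx'
  · exact hy (Subtype.ext hy')
  · exact hx (Subtype.ext hx')

theorem isPrincipal_of_linearMap_surjective {f : I →ₗ[R] R} (hf : Function.Surjective f) :
    I.IsPrincipal := by
  obtain ⟨x, hx⟩ := hf 1
  refine ⟨x, le_antisymm (fun y hy ↦ ?_) (span_singleton_le_iff_mem I |>.mpr x.2)⟩
  have hfy : (x : R) * f ⟨y, hy⟩ = y := by
    rw [← smul_eq_mul, ← map_smul, coe_smul_comm, map_smul, hx, smul_eq_mul, mul_one]
  exact mem_span_singleton'.mpr ⟨f ⟨y, hy⟩, mul_comm _ (x : R) ▸ hfy⟩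

end Ideal

theorem stmt0_general (R : Type*) [CommRing R] [IsDomain R] [IsLocalRing R]
    (hnp : ¬ (IsLocalRing.maximalIdeal R).IsPrincipal) :
    (¬ ∃ (N P : Submodule R (IsLocalRing.maximalIdeal R)),
        N ≠ ⊥ ∧ P ≠ ⊥ ∧ IsCompl N P) ∧
    (¬ ∃ f : (IsLocalRing.maximalIdeal R) →ₗ[R] R, Function.Surjective f) :=
  ⟨fun ⟨_, _, hN, hP, hc⟩ ↦ Ideal.not_disjoint_of_ne_bot _ hN hP hc.disjoint,
    fun ⟨_, hf⟩ ↦ hnp (Ideal.isPrincipal_of_linearMap_surjective _ hf)⟩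

/-- Over a one-dimensional Noetherian local domain `(R, m, k)` with `m` not
principal, the maximal ideal `m` is indecomposable as an `R`-module; in particular there is
no surjective `R`-module homomorphism from `m` onto `R`. -/
theorem stmt0 (R : Type*) [CommRing R] [IsDomain R] [IsNoetherianRing R] [IsLocalRing R]
    (hdim : ringKrullDim R = 1)
    (hnp : ¬ (IsLocalRing.maximalIdeal R).IsPrincipal) :
    (¬ ∃ (N P : Submodule R (IsLocalRing.maximalIdeal R)),
        N ≠ ⊥ ∧ P ≠ ⊥ ∧ IsCompl N P) ∧
    (¬ ∃ f : (IsLocalRing.maximalIdeal R) →ₗ[R] R, Function.Surjective f) :=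
  stmt0_general R hnp
end

section
/- If m is not principal, then Hom_R(m, R) = Hom_R(m, m), i.e., every R-linear map from m to R has image contained in m. -/
theorem Ideal.coe_mul_apply_comm {R : Type*} [CommRing R] {I : Ideal R} (f : I →ₗ[R] R)
    (x y : I) : (x : R) * f y = y * f x := by
  rw [← smul_eq_mul, ← smul_eq_mul, ← map_smul, ← map_smul]
  congr 1
  ext
  exact mul_comm _ _

theorem Ideal.eq_span_singleton_of_isUnit_apply {R : Type*} [CommRing R] {I : Ideal R}
    (f : I →ₗ[R] R) (x : I) (hx : IsUnit (f x)) : I = Ideal.span {(x : R)} := by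
  refine le_antisymm (fun y hy => ?_) ((Ideal.span_singleton_le_iff_mem I).mpr x.2)
  obtain ⟨u, hu⟩ := hx
  refine Ideal.mem_span_singleton'.mpr ⟨f ⟨y, hy⟩ * ↑u⁻¹, ?_⟩
  calc f ⟨y, hy⟩ * ↑u⁻¹ * x = y * f x * ↑u⁻¹ := by
        rw [← Ideal.coe_mul_apply_comm f x ⟨y, hy⟩]; ring
    _ = y := by rw [← hu, Units.mul_inv_cancel_right]

theorem stmt1_general (R : Type*) [CommRing R] [IsLocalRing R]
    (hnp : ¬ (IsLocalRing.maximalIdeal R).IsPrincipal) :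
    ∀ f : (IsLocalRing.maximalIdeal R) →ₗ[R] R, ∀ x, f x ∈ IsLocalRing.maximalIdeal R := by
  intro f x
  by_contra hx
  have hunit : IsUnit (f x) := by simpa [IsLocalRing.mem_maximalIdeal] using hx
  exact hnp ⟨x, Ideal.eq_span_singleton_of_isUnit_apply f x hunit⟩

/-- Over a one-dimensional Noetherian local domain `(R, m, k)` with `m` not
principal, every `R`-linear map from `m` to `R` has image contained in `m`, i.e.
`Hom_R(m, R) = Hom_R(m, m)`. -/
theorem stmt1 (R : Type*) [CommRing R] [IsDomain R] [IsNoetherianRing R] [IsLocalRing R]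
    (hdim : ringKrullDim R = 1)
    (hnp : ¬ (IsLocalRing.maximalIdeal R).IsPrincipal) :
    ∀ f : (IsLocalRing.maximalIdeal R) →ₗ[R] R, ∀ x, f x ∈ IsLocalRing.maximalIdeal R :=
  stmt1_general R hnp
end

section
/- A subset of an S-module is linearly independent over S if and only if it is linearly independent over R; consequently, for a finitely generated S-module M, dim_K(K ⊗_R M) = dim_K(K ⊗_S M). -/
open scoped TensorProduct
set_option synthInstance.maxHeartbeats 1000000
set_option maxHeartbeats 1000000

lemma frac_aux (R : Type*) [CommRing R] [IsDomain R]
    (S : Subalgebra R (FractionRing R)) : IsFractionRing S (FractionRing R) := by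
  set K := FractionRing R
  have hinj : Function.Injective (algebraMap S K) := fun a b h => Subtype.ext h
  constructor
  constructor
  · rintro ⟨y, hy⟩
    have hy0 : (y : S) ≠ 0 := nonZeroDivisors.ne_zero hy
    have : algebraMap S K y ≠ 0 := fun h => hy0 (hinj (by simpa using h))
    exact this.isUnit
  · intro z
    obtain ⟨⟨a, b⟩, hab⟩ := IsLocalization.surj (nonZeroDivisors R) (S := K) z
    refine ⟨⟨algebraMap R S a, ⟨algebraMap R S b, ?_⟩⟩, ?_⟩
    · refine mem_nonZeroDivisors_of_ne_zero fun h => ?_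
      have : algebraMap R K (b : R) = 0 := by
        rw [IsScalarTower.algebraMap_apply R S K, h, map_zero]
      exact nonZeroDivisors.ne_zero b.2 (IsFractionRing.injective R K (by rw [map_zero]; exact this))
    · simpa [← IsScalarTower.algebraMap_apply R S K] using hab
  · intro x y h
    exact ⟨1, by simpa using hinj h⟩

lemma li_aux (R : Type*) [CommRing R] [IsDomain R]
    (S : Subalgebra R (FractionRing R))
    (M : Type*) [AddCommGroup M] [Module S M] [Module R M] [IsScalarTower R S M]
    (ι : Type*) (v : ι → M) : LinearIndependent S v ↔ LinearIndependent R v := by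
  set K := FractionRing R
  have hRS : Function.Injective (algebraMap R S) := by
    intro a b h
    apply IsFractionRing.injective R K
    rw [IsScalarTower.algebraMap_apply R S K, h, ← IsScalarTower.algebraMap_apply R S K]
  classical
  constructor
  · intro hv
    refine hv.restrict_scalars ?_
    intro a b h
    apply hRS
    simpa [Algebra.algebraMap_eq_smul_one] using h
  · intro hv
    rw [linearIndependent_iff'] at hv ⊢
    intro t g hg i hit
    -- common denominator
    obtain ⟨b, hb⟩ := IsLocalization.exist_integer_multiples (nonZeroDivisors R) t
      (fun i => ((g i : S) : K))
    choose r hr using hb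
    -- b • g i = algebraMap R S (r i) in S
    have key : ∀ i (hi : i ∈ t), algebraMap R S (r i hi) = (b : R) • g i := by
      intro i hi
      apply Subtype.ext
      have := hr i hi
      simpa [IsScalarTower.algebraMap_apply R S K, Subalgebra.coe_smul,
        Algebra.smul_def] using this
    have hz : ∀ i ∈ t, (fun i => if hi : i ∈ t then r i hi else 0) i = 0 := by
      refine hv t _ ?_
      have : ∑ i ∈ t, (if hi : i ∈ t then r i hi else 0) • v i
          = (b : R) • ∑ i ∈ t, g i • v i := by
        rw [Finset.smul_sum]
        refine Finset.sum_congr rfl fun i hi => ?_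
        rw [dif_pos hi, ← algebraMap_smul S (r i hi) (v i), key i hi,
          ← smul_assoc, ← algebraMap_smul S (b : R) (g i), smul_eq_mul]
      rw [this, hg, smul_zero]
    have hri : r i hit = 0 := by simpa [hit] using hz i hit
    have : (b : R) • g i = 0 := by rw [← key i hit, hri, map_zero]
    have hb0 : algebraMap R K (b : R) ≠ 0 :=
      IsFractionRing.to_map_ne_zero_of_mem_nonZeroDivisors b.2
    have : algebraMap R K (b : R) * ((g i : S) : K) = 0 := by
      have := congrArg (Subalgebra.val S) this
      simpa [Algebra.smul_def, IsScalarTower.algebraMap_apply R S K] using this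
    have : ((g i : S) : K) = 0 := by
      rcases mul_eq_zero.mp this with h | h
      · exact absurd h hb0
      · exact h
    exact Subtype.ext (by simpa using this)

/-- Let `R` be a Noetherian domain with fraction field `K` and `S` a subring of
`K` containing `R`, finitely generated as an `R`-module.  A subset of an `S`-module `M` is
linearly independent over `S` iff it is linearly independent over `R`; consequently, for `M`
finitely generated over `S`, `dim_K (K ⊗_R M) = dim_K (K ⊗_S M)`. -/
theorem stmt5 (R : Type*) [CommRing R] [IsDomain R] [IsNoetherianRing R]
    (S : Subalgebra R (FractionRing R)) (hS : Module.Finite R S)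
    (M : Type*) [AddCommGroup M] [Module S M] [Module R M] [IsScalarTower R S M]
    (hM : Module.Finite S M) :
    (∀ (ι : Type*) (v : ι → M), LinearIndependent S v ↔ LinearIndependent R v) ∧
    Module.finrank (FractionRing R) ((FractionRing R) ⊗[R] M) =
      Module.finrank (FractionRing R) ((FractionRing R) ⊗[S] M) := by
  set K := FractionRing R
  refine ⟨fun ι v => li_aux R S M ι v, ?_⟩
  have := frac_aux R S
  have h1 : IsLocalizedModule (nonZeroDivisors R) (TensorProduct.mk R K M 1) :=
    (isLocalizedModule_iff_isBaseChange (nonZeroDivisors R) K _).mpr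
      (TensorProduct.isBaseChange R M K)
  have h2 : IsLocalizedModule (nonZeroDivisors S) (TensorProduct.mk S K M 1) :=
    (isLocalizedModule_iff_isBaseChange (nonZeroDivisors S) K _).mpr
      (TensorProduct.isBaseChange S M K)
  have e1 : Module.finrank K (K ⊗[R] M) = (Module.rank R M).toNat := by
    have h := IsLocalizedModule.lift_rank_eq (nonZeroDivisors R)
      (TensorProduct.mk R K M 1) le_rfl
    rw [Module.finrank, IsLocalization.rank_eq K (nonZeroDivisors R) le_rfl,
      ← Cardinal.toNat_lift (Module.rank R (K ⊗[R] M)), h,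
      Cardinal.toNat_lift]
  have e2 : Module.finrank K (K ⊗[S] M) = (Module.rank S M).toNat := by
    have h := IsLocalizedModule.lift_rank_eq (nonZeroDivisors S)
      (TensorProduct.mk S K M 1) le_rfl
    have h' := congrArg Cardinal.toNat h
    rw [Cardinal.toNat_lift, Cardinal.toNat_lift] at h'
    rw [Module.finrank, IsLocalization.rank_eq K (nonZeroDivisors S) le_rfl]
    exact h'
  have r3 : Module.rank R M = Module.rank S M := by
    apply le_antisymm
    · rw [Module.rank_def]
      refine ciSup_le' fun ⟨s, hs⟩ => ?_
      exact ((li_aux R S M s Subtype.val).mpr hs).cardinal_le_rank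
    · rw [Module.rank_def (R := S)]
      refine ciSup_le' fun ⟨s, hs⟩ => ?_
      exact ((li_aux R S M s Subtype.val).mp hs).cardinal_le_rank
  rw [e1, e2, r3]
end

section
/- If M ⊗_R N is torsion-free over R, then the natural surjection M ⊗_R N → M ⊗_S N is an isomorphism. -/
/-!
Every `s ∈ S` is a fraction `a / b` with `b` a non-zero-divisor of `R`, and in `M ⊗[R] N`
`b • ((s • m) ⊗ₜ n - m ⊗ₜ (s • n)) = (a • m) ⊗ₜ n - m ⊗ₜ (a • n) = 0`.
Torsion-freeness therefore makes the `S`-actions on the two factors agree in `M ⊗[R] N`, so the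
relations defining `M ⊗[S] N` already hold in `M ⊗[R] N` and the surjection has an inverse.
-/

open scoped TensorProduct

namespace TensorProduct

section Balanced

variable {R S M N : Type*} [CommSemiring R] [CommSemiring S] [Algebra R S]
  [AddCommMonoid M] [Module R M] [Module S M] [IsScalarTower R S M]
  [AddCommMonoid N] [Module R N] [Module S N] [IsScalarTower R S N]

theorem smul_tmul_of_smul_eq_algebraMap {r a : R} {s : S}
    (hr : IsSMulRegular (M ⊗[R] N) r) (hs : r • s = algebraMap R S a) (m : M) (n : N) :
    (s • m) ⊗ₜ[R] n = m ⊗ₜ[R] (s • n) := by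
  apply hr
  simp only [smul_tmul', ← smul_assoc, hs, algebraMap_smul, smul_tmul]

theorem bijective_of_map_tmul_eq_tmul [CompatibleSMul R S M N] (f : M ⊗[R] N →+ M ⊗[S] N)
    (hf : ∀ (m : M) (n : N), f (m ⊗ₜ[R] n) = m ⊗ₜ[S] n) : Function.Bijective f := by
  let e := (equivOfCompatibleSMul R S R M N).symm
  have hfe : ⇑f = e := funext fun x => by
    induction x with
    | zero => simp
    | tmul m n => exact hf m n
    | add x y hx hy => rw [map_add, map_add, hx, hy]
  exact hfe ▸ e.bijective

end Balanced

theorem compatibleSMul_of_isFractionRing {R K M N : Type*} [CommRing R] [CommRing K]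
    [Algebra R K] [IsFractionRing R K] (S : Subalgebra R K)
    [AddCommMonoid M] [Module R M] [Module S M] [IsScalarTower R S M]
    [AddCommMonoid N] [Module R N] [Module S N] [IsScalarTower R S N]
    [Module.IsTorsionFree R (M ⊗[R] N)] : CompatibleSMul R S M N where
  smul_tmul s := by
    obtain ⟨⟨a, b⟩, hab⟩ := IsLocalization.surj (nonZeroDivisors R) (s : K)
    refine smul_tmul_of_smul_eq_algebraMap (r := (b : R)) (a := a)
      (isRegular_iff_mem_nonZeroDivisors.mpr b.2).isSMulRegular (Subtype.ext ?_)
    rw [Subalgebra.coe_smul, Subalgebra.coe_algebraMap, _root_.Algebra.smul_def, mul_comm]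
    exact hab

end TensorProduct

theorem stmt6_general (R : Type*) [CommRing R] [IsDomain R]
    (S : Subalgebra R (FractionRing R))
    (M : Type*) [AddCommGroup M] [Module S M] [Module R M] [IsScalarTower R S M]
    (N : Type*) [AddCommGroup N] [Module S N] [Module R N] [IsScalarTower R S N]
    (htf : ∀ (r : R) (x : M ⊗[R] N), r • x = 0 → r = 0 ∨ x = 0)
    (f : M ⊗[R] N →+ M ⊗[S] N) (hf : ∀ (m : M) (n : N), f (m ⊗ₜ[R] n) = m ⊗ₜ[S] n) :
    Function.Bijective f := by
  have : Module.IsTorsionFree R (M ⊗[R] N) := .of_smul_eq_zero htf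
  have := TensorProduct.compatibleSMul_of_isFractionRing (M := M) (N := N) S
  exact TensorProduct.bijective_of_map_tmul_eq_tmul f hf

/-- Let `R` be a one-dimensional Noetherian local domain with fraction field
`K`, `S` a subring of `K` containing `R` that is finitely generated as an `R`-module, and
`M`, `N` finitely generated `S`-modules.  If `M ⊗_R N` is torsion-free over `R` (no nonzero
element is annihilated by a nonzero element of `R`), then the natural surjection
`M ⊗_R N → M ⊗_S N` is an isomorphism. -/
theorem stmt6 (R : Type*) [CommRing R] [IsDomain R] [IsNoetherianRing R] [IsLocalRing R]
    (hdim : ringKrullDim R = 1)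
    (S : Subalgebra R (FractionRing R)) (hS : Module.Finite R S)
    (M : Type*) [AddCommGroup M] [Module S M] [Module R M] [IsScalarTower R S M]
    (N : Type*) [AddCommGroup N] [Module S N] [Module R N] [IsScalarTower R S N]
    (hM : Module.Finite S M) (hN : Module.Finite S N)
    (htf : ∀ (r : R) (x : M ⊗[R] N), r • x = 0 → r = 0 ∨ x = 0)
    (f : M ⊗[R] N →+ M ⊗[S] N) (hf : ∀ (m : M) (n : N), f (m ⊗ₜ[R] n) = m ⊗ₜ[S] n) :
    Function.Bijective f :=
  stmt6_general R S M N htf f hf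
end
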